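/- arXiv:hep-th/9606175 — 4 statements merged into one kernel-verified Lean document; each statement's English description precedes it below -/
import Mathlib

section
/- The maps Δ, ε, S make D(G) a Hopf algebra: Δ and ε are unital algebra homomorphisms, Δ is coassociative ((Δ⊗id)∘Δ = (id⊗Δ)∘Δ), ε is a counit for Δ ((ε⊗id)∘Δ = (id⊗ε)∘Δ = id), and S satisfies the antipode identities m∘(S⊗id)∘Δ = m∘(id⊗S)∘Δ = ε(·)·1, where m denotes the multiplication map. -/
noncomputable section

/- An element of the quantum double `D(G)` is a complex-valued function on `G × G`
(the coefficients in the basis `{V_g U_h}`); similarly an element of `D(G) ⊗ D(G)` is a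
function on `(G × G) × (G × G)`, and an element of `D(G)⊗D(G)⊗D(G)` a function on
`(G × G) × (G × G) × (G × G)`. -/

/-- The unit `1 = ∑ g, V_g U_e` of `D(G)`. -/
def done (G : Type*) [Group G] [DecidableEq G] : G × G → ℂ :=
  fun p => if p.2 = 1 then 1 else 0

/-- The unit `1 ⊗ 1` of `D(G) ⊗ D(G)`. -/
def done2 (G : Type*) [Group G] [DecidableEq G] : (G × G) × (G × G) → ℂ :=
  fun p => done G p.1 * done G p.2

/-- The multiplication of `D(G)`, determined on the basis by
`(V_{g₁} U_{h₁})·(V_{g₂} U_{h₂}) = δ_{g₁, h₁ g₂ h₁⁻¹} V_{g₁} U_{h₁ h₂}`. -/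
def dmul {G : Type*} [Group G] [Fintype G] (x y : G × G → ℂ) : G × G → ℂ :=
  fun p => ∑ h : G, x (p.1, h) * y (h⁻¹ * p.1 * h, h⁻¹ * p.2)

/-- The multiplication of `D(G) ⊗ D(G)` (the multiplication of `D(G)` in each leg). -/
def dmul2 {G : Type*} [Group G] [Fintype G]
    (x y : (G × G) × (G × G) → ℂ) : (G × G) × (G × G) → ℂ :=
  fun p => ∑ h : G, ∑ k : G,
    x ((p.1.1, h), (p.2.1, k)) *
    y ((h⁻¹ * p.1.1 * h, h⁻¹ * p.1.2), (k⁻¹ * p.2.1 * k, k⁻¹ * p.2.2))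

/-- The coproduct `Δ` of `D(G)`, determined on the basis by
`Δ(V_g U_h) = ∑_{a b = g} V_a U_h ⊗ V_b U_h`. -/
def dcop {G : Type*} [Group G] [DecidableEq G]
    (x : G × G → ℂ) : (G × G) × (G × G) → ℂ :=
  fun p => if p.1.2 = p.2.2 then x (p.1.1 * p.2.1, p.1.2) else 0

/-- The counit `ε` of `D(G)`, determined on the basis by `ε(V_g U_h) = δ_{g,e}`. -/
def deps {G : Type*} [Group G] [Fintype G] (x : G × G → ℂ) : ℂ :=
  ∑ h : G, x (1, h)

/-- The map `Δ ⊗ id : D(G)⊗D(G) → D(G)⊗D(G)⊗D(G)`. -/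
def copId {G : Type*} [Group G] [DecidableEq G]
    (x : (G × G) × (G × G) → ℂ) : (G × G) × (G × G) × (G × G) → ℂ :=
  fun p => if p.1.2 = p.2.1.2 then x ((p.1.1 * p.2.1.1, p.1.2), p.2.2) else 0

/-- The map `id ⊗ Δ : D(G)⊗D(G) → D(G)⊗D(G)⊗D(G)`. -/
def idCop {G : Type*} [Group G] [DecidableEq G]
    (x : (G × G) × (G × G) → ℂ) : (G × G) × (G × G) × (G × G) → ℂ :=
  fun p => if p.2.1.2 = p.2.2.2 then x (p.1, (p.2.1.1 * p.2.2.1, p.2.1.2)) else 0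

/-- The map `ε ⊗ id : D(G)⊗D(G) → ℂ⊗D(G) = D(G)`. -/
def epsId {G : Type*} [Group G] [Fintype G]
    (x : (G × G) × (G × G) → ℂ) : G × G → ℂ :=
  fun p => ∑ h : G, x ((1, h), p)

/-- The map `id ⊗ ε : D(G)⊗D(G) → D(G)⊗ℂ = D(G)`. -/
def idEps {G : Type*} [Group G] [Fintype G]
    (x : (G × G) × (G × G) → ℂ) : G × G → ℂ :=
  fun p => ∑ h : G, x (p, (1, h))

/-- The multiplication map `m : D(G)⊗D(G) → D(G)`. -/
def dmulmap {G : Type*} [Group G] [Fintype G]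
    (x : (G × G) × (G × G) → ℂ) : G × G → ℂ :=
  fun p => ∑ h : G, x ((p.1, h), (h⁻¹ * p.1 * h, h⁻¹ * p.2))

/-- The map `S ⊗ id : D(G)⊗D(G) → D(G)⊗D(G)`, where `S` is the antipode determined on
the basis by `S(V_g U_h) = V_{h⁻¹ g⁻¹ h} U_{h⁻¹}`. -/
def antipId {G : Type*} [Group G]
    (x : (G × G) × (G × G) → ℂ) : (G × G) × (G × G) → ℂ :=
  fun p => x ((p.1.2⁻¹ * p.1.1⁻¹ * p.1.2, p.1.2⁻¹), p.2)

/-- The map `id ⊗ S : D(G)⊗D(G) → D(G)⊗D(G)`. -/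
def idAntip {G : Type*} [Group G]
    (x : (G × G) × (G × G) → ℂ) : (G × G) × (G × G) → ℂ :=
  fun p => x (p.1, (p.2.2⁻¹ * p.2.1⁻¹ * p.2.2, p.2.2⁻¹))

/-! Every identity is checked coefficientwise. `Δ x` only charges tensors `V_a U_h ⊗ V_b U_h`
with equal `U`-labels: this collapses the double sum in `Δ x · Δ y`, and forces the `U`-label of
`m ∘ (S ⊗ id) ∘ Δ x` and of `m ∘ (id ⊗ S) ∘ Δ x` to be `e`. Beyond that one only needs that
conjugation `a ↦ h⁻¹ a h` is multiplicative, and that left translation and inversion permute `G`,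
which reindexes the remaining sums into `ε`. -/

section

variable {G : Type*} [Group G]

theorem dcop_dmul [Fintype G] [DecidableEq G] (x y : G × G → ℂ) :
    dcop (dmul x y) = dmul2 (dcop x) (dcop y) := by
  ext ⟨⟨a, u⟩, ⟨b, v⟩⟩
  have conj_mul : ∀ h : G, h⁻¹ * a * h * (h⁻¹ * b * h) = h⁻¹ * (a * b) * h := fun h => by group
  simp only [dcop, dmul, dmul2, ite_mul, zero_mul, Finset.sum_ite_eq, Finset.mem_univ, if_true,
    mul_right_inj, conj_mul]
  by_cases huv : u = v <;> simp [huv]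

theorem dcop_done [DecidableEq G] : dcop (done G) = done2 G := by
  ext ⟨⟨a, u⟩, ⟨b, v⟩⟩
  simp only [dcop, done, done2]
  split_ifs <;> simp_all

theorem dcop_smul_add [DecidableEq G] (c : ℂ) (x y : G × G → ℂ) :
    dcop (c • x + y) = c • dcop x + dcop y := by
  ext p
  simp only [dcop, Pi.add_apply, Pi.smul_apply, smul_eq_mul]
  split_ifs <;> simp

theorem deps_dmul [Fintype G] (x y : G × G → ℂ) : deps (dmul x y) = deps x * deps y := by
  simp only [deps, dmul, mul_one, inv_mul_cancel]
  rw [Finset.sum_comm, Finset.sum_mul]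
  refine Fintype.sum_congr _ _ fun h => ?_
  rw [← Finset.mul_sum]
  congr 1
  exact Fintype.sum_equiv (Equiv.mulLeft h⁻¹) _ _ fun _ => rfl

theorem deps_done [Fintype G] [DecidableEq G] : deps (done G) = 1 := by
  simp [deps, done]

theorem deps_smul_add [Fintype G] (c : ℂ) (x y : G × G → ℂ) :
    deps (c • x + y) = c * deps x + deps y := by
  simp [deps, Finset.mul_sum, Finset.sum_add_distrib]

theorem copId_dcop_eq_idCop_dcop [DecidableEq G] (x : G × G → ℂ) :
    copId (dcop x) = idCop (dcop x) := by
  ext ⟨⟨a, u⟩, ⟨b, v⟩, ⟨c, w⟩⟩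
  simp only [copId, idCop, dcop, mul_assoc]
  by_cases huv : u = v <;> by_cases hvw : v = w <;> simp_all

theorem epsId_dcop [Fintype G] [DecidableEq G] (x : G × G → ℂ) : epsId (dcop x) = x := by
  ext p
  simp [epsId, dcop]

theorem idEps_dcop [Fintype G] [DecidableEq G] (x : G × G → ℂ) : idEps (dcop x) = x := by
  ext p
  simp [idEps, dcop]

theorem dmulmap_antipId_dcop [Fintype G] [DecidableEq G] (x : G × G → ℂ) :
    dmulmap (antipId (dcop x)) = deps x • done G := by
  ext ⟨g, u⟩
  by_cases hu : u = 1
  · subst hu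
    simp only [dmulmap, antipId, dcop, deps, done, mul_one, if_true, Pi.smul_apply, smul_eq_mul]
    have conj_inv_mul : ∀ h : G, h⁻¹ * g⁻¹ * h * (h⁻¹ * g * h) = 1 := fun h => by group
    simp only [conj_inv_mul]
    exact Fintype.sum_equiv (Equiv.inv G) _ _ fun _ => rfl
  · simp [dmulmap, antipId, dcop, deps, done, hu]

theorem dmulmap_idAntip_dcop [Fintype G] [DecidableEq G] (x : G × G → ℂ) :
    dmulmap (idAntip (dcop x)) = deps x • done G := by
  ext ⟨g, u⟩
  by_cases hu : u = 1
  · subst hu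
    simp [dmulmap, idAntip, dcop, deps, done]
  · simp [dmulmap, idAntip, dcop, deps, done, hu]

end

/-- the maps `Δ`, `ε`, `S` make `D(G)` a Hopf algebra: `Δ` and `ε` are
unital algebra homomorphisms, `Δ` is coassociative, `ε` is a counit for `Δ`, and `S`
satisfies the antipode identities `m∘(S⊗id)∘Δ = m∘(id⊗S)∘Δ = ε(·)·1`. -/
theorem statement3 (G : Type*) [Group G] [Fintype G] [DecidableEq G] :
    -- `Δ` is a unital algebra homomorphism
    (∀ x y : G × G → ℂ, dcop (dmul x y) = dmul2 (dcop x) (dcop y)) ∧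
    dcop (done G) = done2 G ∧
    (∀ (c : ℂ) (x y : G × G → ℂ), dcop (c • x + y) = c • dcop x + dcop y) ∧
    -- `ε` is a unital algebra homomorphism
    (∀ x y : G × G → ℂ, deps (dmul x y) = deps x * deps y) ∧
    deps (done G) = 1 ∧
    (∀ (c : ℂ) (x y : G × G → ℂ), deps (c • x + y) = c * deps x + deps y) ∧
    -- coassociativity `(Δ⊗id)∘Δ = (id⊗Δ)∘Δ`
    (∀ x : G × G → ℂ, copId (dcop x) = idCop (dcop x)) ∧
    -- counit property `(ε⊗id)∘Δ = (id⊗ε)∘Δ = id`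
    (∀ x : G × G → ℂ, epsId (dcop x) = x) ∧
    (∀ x : G × G → ℂ, idEps (dcop x) = x) ∧
    -- antipode property `m∘(S⊗id)∘Δ = m∘(id⊗S)∘Δ = ε(·)·1`
    (∀ x : G × G → ℂ, dmulmap (antipId (dcop x)) = deps x • done G) ∧
    (∀ x : G × G → ℂ, dmulmap (idAntip (dcop x)) = deps x • done G) :=
  ⟨dcop_dmul, dcop_done, dcop_smul_add, deps_dmul, deps_done, deps_smul_add,
    copId_dcop_eq_idCop_dcop, epsId_dcop, idEps_dcop, dmulmap_antipId_dcop, dmulmap_idAntip_dcop⟩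
end
end

section
/- The element R = Σ_{g∈G} V_g ⊗ U_g is invertible in D(G) ⊗ D(G) and intertwines the coproduct with its opposite: R · Δ(x) · R⁻¹ = σ∘Δ(x) for all x ∈ D(G), where σ is the flip on D(G)⊗D(G). (Quasitriangularity of D(G) with the R-matrix (4.32)) -/
noncomputable section

/-- The flip `σ : a ⊗ b ↦ b ⊗ a` on `D(G) ⊗ D(G)`. -/
def dflip {G : Type*} [Group G]
    (x : (G × G) × (G × G) → ℂ) : (G × G) × (G × G) → ℂ :=
  fun p => x (p.2, p.1)

/-- The R-matrix `R = ∑ g, V_g ⊗ U_g` of `D(G)`. -/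
def Rmat (G : Type*) [Group G] [DecidableEq G] : (G × G) × (G × G) → ℂ :=
  fun p => if p.1.2 = 1 ∧ p.2.2 = p.1.1 then 1 else 0


/-- The candidate inverse `∑ g, V_g ⊗ U_{g⁻¹}`. -/
def RmatInv (G : Type*) [Group G] [DecidableEq G] : (G × G) × (G × G) → ℂ :=
  fun p => if p.1.2 = 1 ∧ p.2.2 = p.1.1⁻¹ then 1 else 0

lemma lmulR {G : Type*} [Group G] [Fintype G] [DecidableEq G]
    (y : (G × G) × (G × G) → ℂ) (p : (G × G) × (G × G)) :
    dmul2 (Rmat G) y p =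
      y ((p.1.1, p.1.2), (p.1.1⁻¹ * p.2.1 * p.1.1, p.1.1⁻¹ * p.2.2)) := by
  simp [dmul2, Rmat, ite_and, ite_mul, Finset.sum_ite_eq']

lemma rmulRinv {G : Type*} [Group G] [Fintype G] [DecidableEq G]
    (y : (G × G) × (G × G) → ℂ) (p : (G × G) × (G × G)) :
    dmul2 y (RmatInv G) p =
      y ((p.1.1, p.1.2), (p.2.1, p.2.2 * p.1.2⁻¹ * p.1.1 * p.1.2)) := by
  have : ∀ (h k : G),
      RmatInv G ((h⁻¹ * p.1.1 * h, h⁻¹ * p.1.2), (k⁻¹ * p.2.1 * k, k⁻¹ * p.2.2)) =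
      if h = p.1.2 ∧ k = p.2.2 * p.1.2⁻¹ * p.1.1 * p.1.2 then 1 else 0 := by
    intro h k
    simp only [RmatInv]
    congr 1
    rw [eq_iff_iff]
    constructor
    · rintro ⟨h1, h2⟩
      have hh : h = p.1.2 := by
        have := mul_left_cancel (a := h⁻¹) (b := p.1.2) (c := h) (by rw [h1]; group)
        exact this.symm
      subst hh
      refine ⟨rfl, ?_⟩
      have hk : k = p.2.2 * (k⁻¹ * p.2.2)⁻¹ := by group
      rw [hk, h2]; group
    · rintro ⟨h1, h2⟩
      subst h1; subst h2
      constructor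
      · group
      · group
  simp only [dmul2, this, ite_and, mul_ite, mul_one, mul_zero]
  rw [Finset.sum_eq_single p.1.2]
  · rw [Finset.sum_eq_single (p.2.2 * p.1.2⁻¹ * p.1.1 * p.1.2)] <;> simp +contextual
  · intro b _ hb
    simp [hb]
  · simp

lemma rmulR {G : Type*} [Group G] [Fintype G] [DecidableEq G]
    (y : (G × G) × (G × G) → ℂ) (p : (G × G) × (G × G)) :
    dmul2 y (Rmat G) p =
      y ((p.1.1, p.1.2), (p.2.1, p.2.2 * p.1.2⁻¹ * p.1.1⁻¹ * p.1.2)) := by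
  have : ∀ (h k : G),
      Rmat G ((h⁻¹ * p.1.1 * h, h⁻¹ * p.1.2), (k⁻¹ * p.2.1 * k, k⁻¹ * p.2.2)) =
      if h = p.1.2 ∧ k = p.2.2 * p.1.2⁻¹ * p.1.1⁻¹ * p.1.2 then 1 else 0 := by
    intro h k
    simp only [Rmat]
    congr 1
    rw [eq_iff_iff]
    constructor
    · rintro ⟨h1, h2⟩
      have hh : h = p.1.2 := by
        have := mul_left_cancel (a := h⁻¹) (b := p.1.2) (c := h) (by rw [h1]; group)
        exact this.symm
      subst hh
      refine ⟨rfl, ?_⟩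
      have hk : k = p.2.2 * (k⁻¹ * p.2.2)⁻¹ := by group
      rw [hk, h2]; group
    · rintro ⟨h1, h2⟩
      subst h1; subst h2
      exact ⟨by group, by group⟩
  simp only [dmul2, this, ite_and, mul_ite, mul_one, mul_zero]
  rw [Finset.sum_eq_single p.1.2]
  · rw [Finset.sum_eq_single (p.2.2 * p.1.2⁻¹ * p.1.1⁻¹ * p.1.2)] <;> simp +contextual
  · intro b _ hb
    simp [hb]
  · simp

/-- STATEMENT 4: the element `R = ∑ g, V_g ⊗ U_g` is invertible in `D(G) ⊗ D(G)` and
intertwines the coproduct with its opposite: `R·Δ(x)·R⁻¹ = σ∘Δ(x)` for all `x ∈ D(G)`,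
where `σ` is the flip on `D(G)⊗D(G)` (quasitriangularity of `D(G)`). -/
theorem statement4 (G : Type*) [Group G] [Fintype G] [DecidableEq G] :
    ∃ Rinv : (G × G) × (G × G) → ℂ,
      dmul2 (Rmat G) Rinv = done2 G ∧
      dmul2 Rinv (Rmat G) = done2 G ∧
      ∀ x : G × G → ℂ,
        dmul2 (dmul2 (Rmat G) (dcop x)) Rinv = dflip (dcop x) := by
  refine ⟨RmatInv G, ?_, ?_, ?_⟩
  · funext p
    rw [lmulR]
    simp [RmatInv, done2, done]
    rcases p with ⟨⟨a, b⟩, ⟨c, d⟩⟩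
    simp only []
    by_cases hb : b = 1 <;> by_cases hd : a⁻¹ * d = a⁻¹ <;>
      simp_all [eq_comm, inv_mul_eq_iff_eq_mul]
  · funext p
    rw [rmulR]
    rcases p with ⟨⟨a, b⟩, ⟨c, d⟩⟩
    simp only [RmatInv, done2, done]
    by_cases hb : b = 1
    · subst hb
      simp only [inv_one, mul_one]
      by_cases hd : d * 1⁻¹ * a⁻¹ * 1 = a⁻¹ <;> simp_all
    · simp [hb]
  · intro x
    funext p
    rw [rmulRinv, lmulR]
    rcases p with ⟨⟨a, b⟩, ⟨c, d⟩⟩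
    simp only [dflip, dcop]
    have key : (b = a⁻¹ * (d * b⁻¹ * a * b)) ↔ (d = b) := by
      constructor
      · intro h
        have h1 : a * b = d * b⁻¹ * a * b := by
          nth_rewrite 1 [h]; group
        have h2 : a = d * b⁻¹ * a := mul_right_cancel h1
        have h3 : d * b⁻¹ = 1 :=
          mul_right_cancel (b := a) (by rw [one_mul, ← h2])
        exact mul_inv_eq_one.mp h3
      · intro h; subst h; group
    by_cases hdb : d = b
    · subst hdb
      rw [if_pos (key.mpr rfl), if_pos rfl]
      congr 1
      group
    · rw [if_neg (fun h => hdb (key.mp h)), if_neg hdb]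
end
end

section
/- The map γ defines an action of the Hopf algebra D(G) on M, i.e., for all a, b ∈ D(G) and x, y ∈ M: (i) γ(1) = id_M; (ii) γ(a)(1_M) = ε(a)·1_M; (iii) γ(a·b) = γ(a)∘γ(b); (iv) writing Δ(a) = Σ a⁽¹⁾⊗a⁽²⁾, one has γ(a)(x·y) = Σ γ(a⁽¹⁾)(x)·γ(a⁽²⁾)(y). If moreover M is a *-algebra with (M_g)* ⊆ M_{g⁻¹} for all g and each α_g is a *-automorphism, then also (v) (γ(a)(x))* = γ(S(a*))(x*). (Theorem 4.5, in the abstract form: any G-graded algebra with a compatible G-action supports an action of the quantum double) -/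
noncomputable section

/-- The antipode `S` of `D(G)`, determined on the basis by
`S(V_g U_h) = V_{h⁻¹ g⁻¹ h} U_{h⁻¹}`. -/
def dS {G : Type*} [Group G] (x : G × G → ℂ) : G × G → ℂ :=
  fun p => x (p.2⁻¹ * p.1⁻¹ * p.2, p.2⁻¹)

/-- The star operation of `D(G)`, determined by `(V_g U_h)* = V_{h⁻¹ g h} U_{h⁻¹}`. -/
def dstar {G : Type*} [Group G] (x : G × G → ℂ) : G × G → ℂ :=
  fun p => star (x (p.2⁻¹ * p.1 * p.2, p.2⁻¹))

/-- Given a `G`-graded algebra `M` with grading projections `γp g` and a `G`-action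
`α`, the map `γ : D(G) × M → M` determined by `γ(V_g U_h)(x) = γ_g(α_h(x))`. -/
def gam {G : Type*} [Group G] [Fintype G] {M : Type*} [Ring M] [Algebra ℂ M]
    (γp : G → M →ₗ[ℂ] M) (α : G →* (M ≃ₐ[ℂ] M)) (a : G × G → ℂ) (x : M) : M :=
  ∑ q : G × G, a q • γp q.1 (α q.2 x)

/-- STATEMENT 15: the map `γ` defines an action of the Hopf algebra `D(G)` on `M`:
(i) `γ(1) = id`; (ii) `γ(a)(1) = ε(a)·1`; (iii) `γ(ab) = γ(a)∘γ(b)`;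
(iv) `γ(a)(xy) = ∑ γ(a⁽¹⁾)(x)·γ(a⁽²⁾)(y)` (sum over `Δ(a) = ∑ a⁽¹⁾⊗a⁽²⁾`).
If moreover `M` is a *-algebra with `(M_g)* ⊆ M_{g⁻¹}` and each `α_g` a
*-automorphism, then also (v) `(γ(a)(x))* = γ(S(a*))(x*)`.

Here `M` is a `G`-graded algebra (grading projections `γp`, with `hdecomp`, `horth`,
`hgrmul`, `hone` as usual) and `α : G →* (M ≃ₐ[ℂ] M)` an action of `G` on `M` by
ℂ-algebra automorphisms compatible with the grading: `α_g(M_h) ⊆ M_{g h g⁻¹}`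
(hypothesis `hcov`). -/
theorem statement15 (G : Type*) [Group G] [Fintype G] [DecidableEq G]
    (M : Type*) [Ring M] [Algebra ℂ M]
    (γp : G → M →ₗ[ℂ] M)
    (hdecomp : ∀ x : M, ∑ g : G, γp g x = x)
    (horth : ∀ g h : G, ∀ x : M, γp g (γp h x) = if g = h then γp h x else 0)
    (hgrmul : ∀ g h : G, ∀ x y : M, γp (g * h) (γp g x * γp h y) = γp g x * γp h y)
    (hone : γp 1 (1 : M) = 1)
    (α : G →* (M ≃ₐ[ℂ] M))
    (hcov : ∀ (g h : G) (x : M), α g (γp h x) = γp (g * h * g⁻¹) (α g x)) :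
    -- (i) γ(1) = id
    (∀ x : M, gam γp α (done G) x = x) ∧
    -- (ii) γ(a)(1) = ε(a)·1
    (∀ a : G × G → ℂ, gam γp α a (1 : M) = deps a • (1 : M)) ∧
    -- (iii) γ(a·b) = γ(a)∘γ(b)
    (∀ (a b : G × G → ℂ) (x : M),
      gam γp α (dmul a b) x = gam γp α a (gam γp α b x)) ∧
    -- (iv) γ(a)(x·y) = ∑ γ(a⁽¹⁾)(x)·γ(a⁽²⁾)(y)
    (∀ (a : G × G → ℂ) (x y : M),
      gam γp α a (x * y) =
        ∑ p : G × G, ∑ q : G × G,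
          dcop a (p, q) • (γp p.1 (α p.2 x) * γp q.1 (α q.2 y))) ∧
    -- (v) (γ(a)(x))* = γ(S(a*))(x*) for any compatible *-algebra structure on M
    (∀ st : M → M,
      (∀ x y : M, st (x * y) = st y * st x) →
      (∀ x : M, st (st x) = x) →
      (∀ x y : M, st (x + y) = st x + st y) →
      (∀ (c : ℂ) (x : M), st (c • x) = star c • st x) →
      (∀ (g : G) (x : M), γp g⁻¹ (st (γp g x)) = st (γp g x)) →
      (∀ (g : G) (x : M), α g (st x) = st (α g x)) →
      ∀ (a : G × G → ℂ) (x : M),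
        st (gam γp α a x) = gam γp α (dS (dstar a)) (st x)) := by
  have hγone : ∀ g : G, γp g (1 : M) = if g = 1 then 1 else 0 := by
    intro g; rw [← hone, horth]
  have hαmul : ∀ (h h' : G) (z : M), α h (α h' z) = α (h * h') z := by
    intro h h' z; rw [map_mul]; rfl
  have key : ∀ (g h k : G) (z : M),
      γp g ((α h) (γp k z)) = if g = h * k * h⁻¹ then γp g ((α h) z) else 0 := by
    intro g h k z
    rw [hcov, horth]
    split
    · next hh => rw [hh]
    · rfl
  have key2 : ∀ (g g1 g2 : G) (u v : M),
      γp g (γp g1 u * γp g2 v) = if g = g1 * g2 then γp g1 u * γp g2 v else 0 := by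
    intro g g1 g2 u v
    conv_lhs => rw [← hgrmul g1 g2 u v, horth]
    split
    · exact hgrmul g1 g2 u v
    · rfl
  have key3 : ∀ (g : G) (u v : M), γp g (u * v) = ∑ g1 : G, γp g1 u * γp (g1⁻¹ * g) v := by
    intro g u v
    conv_lhs => rw [← hdecomp u, ← hdecomp v]
    rw [Finset.sum_mul_sum, map_sum]
    have hiff : ∀ g1 g2 : G, (g = g1 * g2) ↔ (g2 = g1⁻¹ * g) := by
      intro g1 g2; constructor <;> (rintro rfl; group)
    simp only [map_sum, key2, hiff, Finset.sum_ite_eq', Finset.mem_univ, if_true]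
  have swap3 : ∀ (F : G → G → G → M),
      ∑ g : G, ∑ h : G, ∑ g1 : G, F g h g1 = ∑ g1 : G, ∑ h : G, ∑ g : G, F g h g1 := by
    intro F
    rw [Finset.sum_comm]
    conv_rhs => rw [Finset.sum_comm]
    exact Finset.sum_congr rfl fun h _ => Finset.sum_comm
  refine ⟨?_, ?_, ?_, ?_, ?_⟩
  · -- (i)
    intro x
    simp only [gam, done, Fintype.sum_prod_type, ite_smul, one_smul, zero_smul,
      Finset.sum_ite_eq', Finset.mem_univ, if_true, map_one, AlgEquiv.one_apply]
    exact hdecomp x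
  · -- (ii)
    intro a
    simp only [gam, deps, Fintype.sum_prod_type, map_one, hγone]
    rw [Finset.sum_comm]
    simp only [smul_ite, smul_zero, Finset.sum_ite_eq', Finset.mem_univ, if_true]
    rw [Finset.sum_smul]
  · -- (iii)
    intro a b x
    have hiff3 : ∀ (g h g' : G), (g = h * g' * h⁻¹) ↔ (g' = h⁻¹ * g * h) := by
      intro g h g'; constructor <;> (rintro rfl; group)
    trans (∑ g : G, ∑ h : G, ∑ h' : G, (a (g, h) * b (h⁻¹ * g * h, h')) • γp g (α (h * h') x))
    · simp only [gam, dmul, Fintype.sum_prod_type, Finset.sum_smul]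
      refine Finset.sum_congr rfl fun g _ => ?_
      rw [Finset.sum_comm]
      refine Finset.sum_congr rfl fun h _ => ?_
      conv_lhs => rw [← Equiv.sum_comp (Equiv.mulLeft h)
        (fun k => (a (g, h) * b (h⁻¹ * g * h, h⁻¹ * k)) • γp g (α k x))]
      simp [inv_mul_cancel_left]
    · symm
      simp only [gam, Fintype.sum_prod_type, map_sum, map_smul, Finset.smul_sum, smul_smul,
        key, hiff3, smul_ite, smul_zero, hαmul]
      refine Finset.sum_congr rfl fun g _ => Finset.sum_congr rfl fun h _ => ?_
      rw [Finset.sum_comm]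
      simp only [Finset.sum_ite_eq', Finset.mem_univ, if_true]
  · -- (iv)
    intro a x y
    trans (∑ g : G, ∑ h : G, ∑ g1 : G, a (g, h) • (γp g1 (α h x) * γp (g1⁻¹ * g) (α h y)))
    · simp only [gam, Fintype.sum_prod_type, map_mul]
      refine Finset.sum_congr rfl fun g _ => Finset.sum_congr rfl fun h _ => ?_
      rw [key3, Finset.smul_sum]
    · rw [swap3]
      simp only [dcop, Fintype.sum_prod_type, ite_smul, zero_smul,
        Finset.sum_ite_eq, Finset.mem_univ, if_true]
      refine Finset.sum_congr rfl fun g1 _ => Finset.sum_congr rfl fun h _ => ?_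
      conv_lhs => rw [← Equiv.sum_comp (Equiv.mulLeft g1)
        (fun g => a (g, h) • (γp g1 (α h x) * γp (g1⁻¹ * g) (α h y)))]
      simp [inv_mul_cancel_left]
  · -- (v)
    intro st hmul hinv hadd hsmul hgr hα a x
    have h0 : st 0 = 0 := by
      have := hsmul 0 0; simpa using this
    have hsum : ∀ (s : Finset G) (f : G → M),
        st (∑ i ∈ s, f i) = ∑ i ∈ s, st (f i) := by
      intro s f
      induction s using Finset.cons_induction with
      | empty => simpa using h0
      | cons i s hi ih => rw [Finset.sum_cons, hadd, ih, Finset.sum_cons]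
    have hsum2 : ∀ (s : Finset (G × G)) (f : G × G → M),
        st (∑ i ∈ s, f i) = ∑ i ∈ s, st (f i) := by
      intro s f
      induction s using Finset.cons_induction with
      | empty => simpa using h0
      | cons i s hi ih => rw [Finset.sum_cons, hadd, ih, Finset.sum_cons]
    have hstgr : ∀ (g : G) (y : M), st (γp g y) = γp g⁻¹ (st y) := by
      intro g y
      symm
      calc γp g⁻¹ (st y) = ∑ k : G, γp g⁻¹ (st (γp k y)) := by
            conv_lhs => rw [← hdecomp y]
            rw [hsum, map_sum]
          _ = ∑ k : G, if g⁻¹ = k⁻¹ then st (γp k y) else 0 := by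
            refine Finset.sum_congr rfl fun k _ => ?_
            rw [← hgr k, horth, hgr]
          _ = st (γp g y) := by
            simp only [inv_inj]
            have : ∀ k : G, (g⁻¹ = k⁻¹) = (g = k) := by
              intro k; simp [inv_inj]
            simp only [this, Finset.sum_ite_eq, Finset.mem_univ, if_true]
    have harg : ∀ g h : G, h * (h⁻¹ * g⁻¹ * h) * h⁻¹ = g⁻¹ := by
      intro g h; group
    simp only [gam, hsum2, hsum, hsmul, hstgr, ← hα, dS, dstar, Fintype.sum_prod_type, inv_inv, harg]
    conv_rhs => rw [← Equiv.sum_comp (Equiv.inv G)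
      (fun g => ∑ h : G, star (a (g⁻¹, h)) • γp g (α h (st x)))]
    simp
end
end

section
/- Let ψ¹_1, …, ψ¹_{d₁} and ψ²_1, …, ψ²_{d₂} be elements of M, and let D¹ : D(G) → Mat_{d₁}(ℂ) and D² : D(G) → Mat_{d₂}(ℂ) be algebra homomorphisms such that γ(a)(ψ¹_i) = Σ_{i'} D¹(a)_{i'i} ψ¹_{i'} and γ(a)(ψ²_j) = Σ_{j'} D²(a)_{j'j} ψ²_{j'} for all a ∈ D(G). Assume the locality relation γ(V_g)(ψ¹_i) · ψ²_j = α_g(ψ²_j) · γ(V_g)(ψ¹_i) for all g ∈ G and all i, j. Then the fields satisfy the R-matrix commutation relations ψ¹_i · ψ²_j = Σ_{g∈G} Σ_{i',j'} D¹(V_g)_{i'i} · D²(U_g)_{j'j} · ψ²_{j'} · ψ¹_{i'}, i.e., ψ¹_i ψ²_j = Σ_{i',j'} ψ²_{j'} ψ¹_{i'} (D¹_{i'i} ⊗ D²_{j'j})(R) with R = Σ_{g∈G} V_g ⊗ U_g. (Proposition 4.12) -/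
noncomputable section

/-- The basis element `V_g U_h` of the quantum double `D(G)`, modeled as the δ-function
at `(g, h)`; a general element of `D(G)` is a complex-valued function on `G × G`.
In particular `V_g = V_g U_e = VU g 1`. -/
def VU {G : Type*} [Group G] [DecidableEq G] (g h : G) : G × G → ℂ :=
  fun p => if p = (g, h) then 1 else 0

/-- The element `U_g = ∑ k, V_k U_g` of `D(G)`. -/
def Uel (G : Type*) [Group G] [DecidableEq G] (g : G) : G × G → ℂ :=
  fun p => if p.2 = g then 1 else 0

/-- STATEMENT 17: let `ψ¹` and `ψ²` be `D(G)`-tensor multiplets in `M` transforming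
under the action `γ` according to representations `D¹`, `D²` of `D(G)` (hypotheses
`hT₁`, `hT₂`, with `D¹`, `D²` algebra homomorphisms), and assume the locality relation
`γ(V_g)(ψ¹_i)·ψ²_j = α_g(ψ²_j)·γ(V_g)(ψ¹_i)`. Then the fields satisfy the R-matrix
commutation relations
`ψ¹_i·ψ²_j = ∑_{g,i',j'} D¹(V_g)_{i'i} D²(U_g)_{j'j} · ψ²_{j'}·ψ¹_{i'}`,
i.e. `ψ¹_i ψ²_j = ∑ ψ²_{j'} ψ¹_{i'} (D¹_{i'i} ⊗ D²_{j'j})(R)` with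
`R = ∑ g, V_g ⊗ U_g`.

Here `M` is a `G`-graded algebra (grading projections `γp`, with `hdecomp`, `horth`,
`hgrmul`, `hone` as usual) and `α : G →* (M ≃ₐ[ℂ] M)` an action of `G` on `M` by
ℂ-algebra automorphisms satisfying `α_g(M_h) ⊆ M_{g h g⁻¹}` (hypothesis `hcov`). -/
theorem statement17 (G : Type*) [Group G] [Fintype G] [DecidableEq G]
    (M : Type*) [Ring M] [Algebra ℂ M]
    (γp : G → M →ₗ[ℂ] M)
    (hdecomp : ∀ x : M, ∑ g : G, γp g x = x)
    (horth : ∀ g h : G, ∀ x : M, γp g (γp h x) = if g = h then γp h x else 0)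
    (hgrmul : ∀ g h : G, ∀ x y : M, γp (g * h) (γp g x * γp h y) = γp g x * γp h y)
    (hone : γp 1 (1 : M) = 1)
    (α : G →* (M ≃ₐ[ℂ] M))
    (hcov : ∀ (g h : G) (x : M), α g (γp h x) = γp (g * h * g⁻¹) (α g x))
    (d₁ d₂ : ℕ) (ψ₁ : Fin d₁ → M) (ψ₂ : Fin d₂ → M)
    (D₁ : (G × G → ℂ) → Matrix (Fin d₁) (Fin d₁) ℂ)
    (D₂ : (G × G → ℂ) → Matrix (Fin d₂) (Fin d₂) ℂ)
    (hD₁mul : ∀ a b : G × G → ℂ, D₁ (dmul a b) = D₁ a * D₁ b)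
    (hD₁one : D₁ (done G) = 1)
    (hD₂mul : ∀ a b : G × G → ℂ, D₂ (dmul a b) = D₂ a * D₂ b)
    (hD₂one : D₂ (done G) = 1)
    (hT₁ : ∀ (a : G × G → ℂ) (i : Fin d₁),
      gam γp α a (ψ₁ i) = ∑ i' : Fin d₁, D₁ a i' i • ψ₁ i')
    (hT₂ : ∀ (a : G × G → ℂ) (j : Fin d₂),
      gam γp α a (ψ₂ j) = ∑ j' : Fin d₂, D₂ a j' j • ψ₂ j')
    (hloc : ∀ (g : G) (i : Fin d₁) (j : Fin d₂),
      γp g (ψ₁ i) * ψ₂ j = α g (ψ₂ j) * γp g (ψ₁ i)) :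
    ∀ (i : Fin d₁) (j : Fin d₂),
      ψ₁ i * ψ₂ j =
        ∑ g : G, ∑ i' : Fin d₁, ∑ j' : Fin d₂,
          (D₁ (VU g 1) i' i * D₂ (Uel G g) j' j) • (ψ₂ j' * ψ₁ i') := by
  intro i j
  have hgamV : ∀ (g : G) (x : M), gam γp α (VU g 1) x = γp g x := by
    intro g x
    unfold gam VU
    rw [Finset.sum_eq_single (g, (1:G))]
    · simp
    · intro q _ hq; simp [hq]
    · simp
  have hgamU : ∀ (g : G) (x : M), gam γp α (Uel G g) x = α g x := by
    intro g x
    unfold gam Uel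
    rw [Fintype.sum_prod_type]
    have h1 : ∀ a : G, (∑ b : G, (if b = g then (1:ℂ) else 0) • γp a (α b x))
        = γp a (α g x) := by
      intro a
      simp [ite_smul, Finset.sum_ite_eq']
    simp only [h1]
    exact hdecomp _
  calc ψ₁ i * ψ₂ j = (∑ g : G, γp g (ψ₁ i)) * ψ₂ j := by rw [hdecomp]
    _ = ∑ g : G, γp g (ψ₁ i) * ψ₂ j := by rw [Finset.sum_mul]
    _ = ∑ g : G, α g (ψ₂ j) * γp g (ψ₁ i) :=
        Finset.sum_congr rfl fun g _ => hloc g i j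
    _ = ∑ g : G, (∑ j' : Fin d₂, D₂ (Uel G g) j' j • ψ₂ j') *
          (∑ i' : Fin d₁, D₁ (VU g 1) i' i • ψ₁ i') := by
        refine Finset.sum_congr rfl fun g _ => ?_
        rw [← hT₁, ← hT₂, hgamU, hgamV]
    _ = ∑ g : G, ∑ i' : Fin d₁, ∑ j' : Fin d₂,
          (D₁ (VU g 1) i' i * D₂ (Uel G g) j' j) • (ψ₂ j' * ψ₁ i') := by
        refine Finset.sum_congr rfl fun g _ => ?_
        rw [Finset.sum_mul_sum, Finset.sum_comm]
        refine Finset.sum_congr rfl fun i' _ => Finset.sum_congr rfl fun j' _ => ?_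
        rw [smul_mul_smul_comm, mul_comm (D₂ (Uel G g) j' j)]
end
end
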